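/- arXiv:math/0309176 — 2 statements merged into one kernel-verified Lean document; each statement's English description precedes it below -/
import Mathlib

section
/- Let a : X × ℝ₊ → ℝ be continuous with asymptotic expansion a(x,t) ~ Σ_{j=n-1}^{-∞} a_j(x) t^j as t → ∞ (uniformly in x on a compact space X with finite measure), and define S(ρ) = ∫_X ∫_0^∞ e^{-tρ} a(x,t) dt dμ(x) for ρ > 0. Then S(ρ) admits an asymptotic expansion S(ρ) = Σ_{j=0}^{n-1} b_j ρ^{j-n} + b log ρ + O(1) as ρ → 0⁺, where b_j = (n-1-j)! ∫_X a_{n-1-j} dμ and b = -∫_X a_{-1} dμ. -/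
/-!
Fix the expansion at order `N = 1`: for `t ≥ T`, `a(x,t) = Σ_{j=-1}^{n-1} c_j(x) t^j + O(t^{-2})`
uniformly in `x`. On `[0, T]` the integrand is bounded by compactness, and the `O(t^{-2})`
remainder is integrable on `[T, ∞)`, so both contribute `O(1)` uniformly in `ρ`; what remains are
the tails `∫_T^∞ e^{-tρ} t^j dt`. For `j ≥ 0` a tail differs from
`∫_0^∞ e^{-tρ} t^j dt = j! ρ^{-j-1}` by at most `T^{j+1}`. For `j = -1` it is `-log ρ + O(1)`:
split at `t = 1/ρ`; before that point `e^{-tρ}/t` is within `ρ` of `1/t`, after it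
`e^{-tρ}/t ≤ ρ e^{-tρ}`. Integration over the finite measure space `X` keeps all errors bounded.
-/

open Real Set MeasureTheory Filter Asymptotics Topology
open scoped Nat

lemma abs_exp_neg_mul_mul_le {t ρ : ℝ} (ht : 0 ≤ t) (hρ : 0 ≤ ρ) (y : ℝ) :
    |exp (-t * ρ) * y| ≤ |y| := by
  rw [abs_mul, abs_of_pos (exp_pos _)]
  exact mul_le_of_le_one_left (abs_nonneg y) (exp_le_one_iff.2 (by nlinarith))

lemma integral_exp_neg_mul_mul_pow_Ioi {ρ : ℝ} (hρ : 0 < ρ) (k : ℕ) :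
    ∫ t in Ioi (0 : ℝ), exp (-t * ρ) * t ^ k = k ! * ρ ^ (-(k : ℤ) - 1) := by
  have key := integral_rpow_mul_exp_neg_mul_Ioi (a := k + 1) (by positivity) hρ
  rw [add_sub_cancel_right, Gamma_nat_eq_factorial, one_div, inv_rpow hρ.le,
    ← rpow_neg hρ.le, show -((k : ℝ) + 1) = ((-(k : ℤ) - 1 : ℤ) : ℝ) by push_cast; ring,
    rpow_intCast] at key
  rw [mul_comm, ← key]
  refine setIntegral_congr_fun measurableSet_Ioi fun t _ => ?_
  rw [rpow_natCast, mul_comm ρ, neg_mul, mul_comm]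

lemma integrableOn_exp_neg_mul_mul_pow_Ioi {ρ : ℝ} (hρ : 0 < ρ) (k : ℕ) :
    IntegrableOn (fun t => exp (-t * ρ) * t ^ k) (Ioi 0) :=
  .of_integral_ne_zero (by rw [integral_exp_neg_mul_mul_pow_Ioi hρ k]; positivity)

lemma integrableOn_exp_neg_mul_mul_zpow_Ioi {T ρ : ℝ} (hT : 0 < T) (hρ : 0 < ρ) (j : ℤ) :
    IntegrableOn (fun t => exp (-t * ρ) * t ^ j) (Ioi T) := by
  refine integrable_of_isBigO_exp_neg (half_pos hρ) (fun t ht => ?_) ?_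
  · exact ((by fun_prop : Continuous fun t : ℝ => exp (-t * ρ)).continuousAt.mul
      (continuousAt_zpow₀ t j (.inl (hT.trans_le ht).ne'))).continuousWithinAt
  · refine ((isBigO_refl (fun t => exp (-t * ρ)) atTop).mul
      (isLittleO_zpow_exp_pos_mul_atTop j (half_pos hρ)).isBigO).congr_right fun t => ?_
    rw [← exp_add]
    ring_nf

lemma abs_setIntegral_Ioi_exp_neg_mul_mul_pow_sub_le {T ρ : ℝ} (hT : 0 ≤ T) (hρ : 0 < ρ)
    (k : ℕ) : |(∫ t in Ioi T, exp (-t * ρ) * t ^ k) - k ! * ρ ^ (-(k : ℤ) - 1)| ≤ T ^ (k + 1) := by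
  have hint := integrableOn_exp_neg_mul_mul_pow_Ioi hρ k
  rw [← integral_exp_neg_mul_mul_pow_Ioi hρ k, abs_sub_comm,
    intervalIntegral.integral_Ioi_sub_Ioi hint hT, ← Real.norm_eq_abs]
  calc _ ≤ T ^ k * |T - 0| := intervalIntegral.norm_integral_le_of_norm_le_const fun t ht => ?_
    _ = T ^ (k + 1) := by rw [sub_zero, abs_of_nonneg hT, pow_succ]
  rw [uIoc_of_le hT] at ht
  refine (abs_exp_neg_mul_mul_le ht.1.le hρ.le _).trans ?_
  rw [abs_of_nonneg (pow_nonneg ht.1.le k)]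
  exact pow_le_pow_left₀ ht.1.le ht.2 k

lemma abs_setIntegral_Ioi_exp_neg_mul_mul_inv_add_log_le {T ρ : ℝ} (hT : 0 < T) (hρ : 0 < ρ)
    (hTρ : T ≤ ρ⁻¹) :
    |(∫ t in Ioi T, exp (-t * ρ) * t⁻¹) + log ρ| ≤ 2 + |log T| := by
  set B := ρ⁻¹
  have hB : 0 < B := inv_pos.2 hρ
  have hρB : ρ * B = 1 := mul_inv_cancel₀ hρ.ne'
  have hf : IntegrableOn (fun t => exp (-t * ρ) * t⁻¹) (Ioi T) := by
    simpa only [zpow_neg_one] using integrableOn_exp_neg_mul_mul_zpow_Ioi hT hρ (-1)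
  have hinv : IntervalIntegrable (fun t : ℝ => t⁻¹) volume T B :=
    intervalIntegral.intervalIntegrable_inv (fun t ht => (hT.trans_le (uIcc_of_le hTρ ▸ ht).1).ne')
      continuousOn_id
  have hnear : |(∫ t in T..B, exp (-t * ρ) * t⁻¹) - (-log ρ - log T)| ≤ 1 := by
    have hlog : ∫ t in T..B, t⁻¹ = -log ρ - log T := by
      rw [integral_inv_of_pos hT hB, log_div hB.ne' hT.ne', log_inv]
    rw [← hlog, ← intervalIntegral.integral_sub
      ((intervalIntegrable_iff_integrableOn_Ioc_of_le hTρ).2 (hf.mono_set Ioc_subset_Ioi_self))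
      hinv, ← Real.norm_eq_abs]
    calc _ ≤ ρ * |B - T| := intervalIntegral.norm_integral_le_of_norm_le_const fun t ht => ?_
      _ ≤ 1 := by rw [abs_of_nonneg (sub_nonneg.2 hTρ)]; nlinarith
    rw [uIoc_of_le hTρ] at ht
    have ht0 : 0 < t := hT.trans ht.1
    have hlow := add_one_le_exp (-t * ρ)
    have hupp : exp (-t * ρ) ≤ 1 := exp_le_one_iff.2 (by nlinarith)
    rw [← sub_one_mul, Real.norm_eq_abs, abs_mul, abs_of_nonpos (by linarith),
      abs_of_pos (inv_pos.2 ht0), ← div_eq_mul_inv, div_le_iff₀ ht0]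
    linarith
  have hfar : 0 ≤ ∫ t in Ioi B, exp (-t * ρ) * t⁻¹ ∧ ∫ t in Ioi B, exp (-t * ρ) * t⁻¹ ≤ 1 := by
    refine ⟨setIntegral_nonneg measurableSet_Ioi fun t ht => by
      have := hB.trans ht; positivity, ?_⟩
    calc _ ≤ ∫ t in Ioi B, ρ * exp (-ρ * t) :=
          setIntegral_mono_on (hf.mono_set (Ioi_subset_Ioi hTρ))
            ((exp_neg_integrableOn_Ioi B hρ).const_mul ρ) measurableSet_Ioi fun t ht => by
            rw [mul_comm ρ, neg_mul, mul_comm t, ← neg_mul]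
            exact mul_le_mul_of_nonneg_left ((inv_le_comm₀ (hB.trans ht) hρ).2 ht.le) (exp_pos _).le
      _ = exp (-ρ * B) := by
          rw [integral_const_mul, integral_exp_mul_Ioi (neg_lt_zero.2 hρ)]
          field_simp
      _ ≤ 1 := exp_le_one_iff.2 (by nlinarith)
  rw [← intervalIntegral.integral_interval_add_Ioi hf (hf.mono_set (Ioi_subset_Ioi hTρ)), abs_le]
  obtain ⟨hnear_lo, hnear_hi⟩ := abs_le.1 hnear
  constructor <;> linarith [le_abs_self (log T), neg_abs_le (log T)]

/-- For `j ≥ 0` this is `∫_0^∞ e^{-tρ} t^j dt`; at `j = -1`, where that integral diverges,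
`-log ρ` is the singular part of its tails `∫_T^∞`. -/
noncomputable def laplaceZpowMain (j : ℤ) (ρ : ℝ) : ℝ :=
  if j = -1 then -log ρ else j.toNat ! * ρ ^ (-j - 1)

@[simp] lemma laplaceZpowMain_neg_one (ρ : ℝ) : laplaceZpowMain (-1) ρ = -log ρ := if_pos rfl

@[simp] lemma laplaceZpowMain_natCast (k : ℕ) (ρ : ℝ) :
    laplaceZpowMain k ρ = k ! * ρ ^ (-(k : ℤ) - 1) := by
  simp [laplaceZpowMain]

lemma isBigO_setIntegral_Ioi_exp_neg_mul_mul_zpow_sub {T : ℝ} (hT : 0 < T) {j : ℤ}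
    (hj : -1 ≤ j) :
    (fun ρ => (∫ t in Ioi T, exp (-t * ρ) * t ^ j) - laplaceZpowMain j ρ) =O[𝓝[>] 0]
      (fun _ => (1 : ℝ)) := by
  obtain rfl | hj := hj.eq_or_lt
  · refine (isBoundedUnder_of_eventually_le (a := 2 + |log T|) ?_).isBigO_one ℝ
    filter_upwards [Ioo_mem_nhdsGT (inv_pos.2 hT)] with ρ hρ
    simpa only [zpow_neg_one, laplaceZpowMain_neg_one, sub_neg_eq_add, Real.norm_eq_abs] using
      abs_setIntegral_Ioi_exp_neg_mul_mul_inv_add_log_le hT hρ.1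
        ((le_inv_comm₀ hρ.1 hT).1 hρ.2.le)
  · lift j to ℕ using (by omega)
    refine (isBoundedUnder_of_eventually_le (a := T ^ (j + 1)) ?_).isBigO_one ℝ
    filter_upwards [self_mem_nhdsWithin] with ρ hρ
    simpa only [zpow_natCast, laplaceZpowMain_natCast, Real.norm_eq_abs] using
      abs_setIntegral_Ioi_exp_neg_mul_mul_pow_sub_le hT.le hρ j

lemma exists_forall_Ioo_abs_le_of_isBigO_one {f : ℝ → ℝ} {a : ℝ}
    (hf : f =O[𝓝[>] a] (fun _ => (1 : ℝ))) : ∃ δ M : ℝ, a < δ ∧ ∀ ρ ∈ Ioo a δ, |f ρ| ≤ M := by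
  obtain ⟨M, hM⟩ := (isBigO_one_iff ℝ).1 hf
  obtain ⟨δ, hδ, hδM⟩ := (nhdsGT_basis a).eventually_iff.1 (eventually_map.1 hM)
  exact ⟨δ, M, hδ, hδM⟩

lemma sum_range_factorial_mul_zpow_add_neg_mul_log (A : ℤ → ℝ) (n : ℕ) (ρ : ℝ) :
    (∑ j ∈ Finset.range n, ((n - 1 - j)! * A ((n : ℤ) - 1 - j)) * ρ ^ ((j : ℤ) - n))
        + -A (-1) * log ρ
      = ∑ j ∈ Finset.Icc (-1 : ℤ) ((n : ℤ) - 1), A j * laplaceZpowMain j ρ := by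
  have hIcc : Finset.Icc (-1 : ℤ) ((n : ℤ) - 1) = insert (-1) (Finset.Icc 0 ((n : ℤ) - 1)) := by
    ext k; simp only [Finset.mem_Icc, Finset.mem_insert]; omega
  rw [hIcc, Finset.sum_insert (by simp), laplaceZpowMain_neg_one, add_comm, neg_mul, mul_neg]
  congr 1
  refine Finset.sum_nbij' (fun j => (n - 1 - j : ℤ)) (fun k => (n - 1 - k).toNat)
    ?_ ?_ ?_ ?_ fun j hj => ?_
  · intro j hj; simp only [Finset.mem_range, Finset.mem_Icc] at hj ⊢; omega
  · intro k hk; simp only [Finset.mem_range, Finset.mem_Icc] at hk ⊢; omega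
  · intro j hj; simp only [Finset.mem_range] at hj; omega
  · intro k hk; simp only [Finset.mem_Icc] at hk; omega
  · have hk : (n : ℤ) - 1 - j = ((n - 1 - j : ℕ) : ℤ) := by rw [Finset.mem_range] at hj; omega
    rw [hk, laplaceZpowMain_natCast, show -((n - 1 - j : ℕ) : ℤ) - 1 = j - n by omega]
    ring

lemma abs_integral_Ioi_exp_neg_mul_sub_setIntegral_Ioi_le {g p : ℝ → ℝ} {T ρ M C : ℝ}
    (hT : 0 < T) (hρ : 0 < ρ) (hg : Continuous g)
    (hp : IntegrableOn (fun t => exp (-t * ρ) * p t) (Ioi T))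
    (hgM : ∀ t ∈ Ioc 0 T, |g t| ≤ M) (hgp : ∀ t, T ≤ t → |g t - p t| ≤ C * t ^ (-2 : ℝ)) :
    |(∫ t in Ioi 0, exp (-t * ρ) * g t) - ∫ t in Ioi T, exp (-t * ρ) * p t| ≤ M * T + C * T⁻¹ := by
  have hcont : Continuous fun t => exp (-t * ρ) * g t := by fun_prop
  have hbound : IntegrableOn (fun t : ℝ => C * t ^ (-2 : ℝ)) (Ioi T) :=
    (integrableOn_Ioi_rpow_of_lt (by norm_num) hT).const_mul C
  have hrem_le : ∀ᵐ t ∂volume.restrict (Ioi T),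
      ‖exp (-t * ρ) * g t - exp (-t * ρ) * p t‖ ≤ C * t ^ (-2 : ℝ) := by
    refine (ae_restrict_iff' measurableSet_Ioi).2 (ae_of_all _ fun t ht => ?_)
    rw [← mul_sub, Real.norm_eq_abs]
    exact (abs_exp_neg_mul_mul_le (hT.trans ht).le hρ.le _).trans (hgp t ht.le)
  have hrem : IntegrableOn (fun t => exp (-t * ρ) * g t - exp (-t * ρ) * p t) (Ioi T) :=
    hbound.mono' (hcont.aestronglyMeasurable.sub hp.aestronglyMeasurable) hrem_le
  have htail : IntegrableOn (fun t => exp (-t * ρ) * g t) (Ioi T) :=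
    (hrem.add hp).congr_fun (fun t _ => sub_add_cancel _ _) measurableSet_Ioi
  have hhead : |∫ t in (0 : ℝ)..T, exp (-t * ρ) * g t| ≤ M * T := by
    rw [← Real.norm_eq_abs]
    calc _ ≤ M * |T - 0| := intervalIntegral.norm_integral_le_of_norm_le_const fun t ht => ?_
      _ = M * T := by rw [sub_zero, abs_of_pos hT]
    rw [uIoc_of_le hT.le] at ht
    exact (abs_exp_neg_mul_mul_le ht.1.le hρ.le _).trans (hgM t ht)
  have htail_le : |∫ t in Ioi T, (exp (-t * ρ) * g t - exp (-t * ρ) * p t)| ≤ C * T⁻¹ := by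
    rw [← Real.norm_eq_abs]
    calc _ ≤ ∫ t in Ioi T, C * t ^ (-2 : ℝ) := norm_integral_le_of_norm_le hbound hrem_le
      _ = C * T⁻¹ := by
        rw [integral_const_mul, integral_Ioi_rpow_of_lt (by norm_num) hT]
        norm_num [rpow_neg_one]
  rw [← intervalIntegral.integral_interval_add_Ioi' (hcont.intervalIntegrable 0 T) htail,
    add_sub_assoc, ← integral_sub htail hp]
  exact (abs_add_le _ _).trans (add_le_add hhead htail_le)

lemma abs_integral_Ioi_exp_neg_mul_sub_sum_zpow_le {g : ℝ → ℝ} {s : Finset ℤ} {b : ℤ → ℝ}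
    {T ρ M C : ℝ} (hT : 0 < T) (hρ : 0 < ρ) (hg : Continuous g)
    (hgM : ∀ t ∈ Ioc 0 T, |g t| ≤ M)
    (hgb : ∀ t, T ≤ t → |g t - ∑ j ∈ s, b j * t ^ j| ≤ C * t ^ (-2 : ℝ)) :
    |(∫ t in Ioi 0, exp (-t * ρ) * g t) - ∑ j ∈ s, b j * ∫ t in Ioi T, exp (-t * ρ) * t ^ j|
      ≤ M * T + C * T⁻¹ := by
  have hsum : (fun t => exp (-t * ρ) * ∑ j ∈ s, b j * t ^ j)
      = fun t => ∑ j ∈ s, b j * (exp (-t * ρ) * t ^ j) := by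
    simp_rw [Finset.mul_sum, mul_left_comm (exp _)]
  have hint : ∀ j ∈ s, IntegrableOn (fun t => b j * (exp (-t * ρ) * t ^ j)) (Ioi T) :=
    fun j _ => (integrableOn_exp_neg_mul_mul_zpow_Ioi hT hρ j).const_mul (b j)
  have hp : IntegrableOn (fun t => exp (-t * ρ) * ∑ j ∈ s, b j * t ^ j) (Ioi T) :=
    hsum ▸ integrable_finsetSum s hint
  have hp_int : ∫ t in Ioi T, exp (-t * ρ) * ∑ j ∈ s, b j * t ^ j
      = ∑ j ∈ s, b j * ∫ t in Ioi T, exp (-t * ρ) * t ^ j := by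
    rw [hsum, integral_finsetSum s hint]
    simp_rw [integral_const_mul]
  rw [← hp_int]
  exact abs_integral_Ioi_exp_neg_mul_sub_setIntegral_Ioi_le hT hρ hg hp hgM hgb

lemma abs_integral_sub_sum_integral_mul_le {X ι : Type*} [MeasurableSpace X] {μ : Measure X}
    [IsFiniteMeasure μ] {F : X → ℝ} {c : ι → X → ℝ} {s : Finset ι} {w : ι → ℝ} {K : ℝ}
    (hF : Integrable F μ) (hc : ∀ j ∈ s, Integrable (c j) μ)
    (hK : ∀ x, |F x - ∑ j ∈ s, c j x * w j| ≤ K) :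
    |(∫ x, F x ∂μ) - ∑ j ∈ s, (∫ x, c j x ∂μ) * w j| ≤ K * μ.real univ := by
  have hcw : ∀ j ∈ s, Integrable (fun x => c j x * w j) μ := fun j hj => (hc j hj).mul_const _
  have hsum : ∑ j ∈ s, (∫ x, c j x ∂μ) * w j = ∫ x, ∑ j ∈ s, c j x * w j ∂μ := by
    rw [integral_finsetSum s hcw]
    simp_rw [integral_mul_const]
  rw [hsum, ← integral_sub hF (integrable_finsetSum s hcw)]
  exact norm_integral_le_of_norm_le_const
    (ae_of_all _ fun x => (Real.norm_eq_abs _).trans_le (hK x))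

theorem stmt_3_general {X : Type*} [TopologicalSpace X] [CompactSpace X] [MeasurableSpace X] (μ : Measure X) [IsFiniteMeasure μ]
    (n : ℕ) (a : X → ℝ → ℝ) (c : ℤ → X → ℝ)
    (ha : Continuous (Function.uncurry a))
    (hc : ∀ j : ℤ, Integrable (c j) μ)
    (hexp : ∀ N : ℕ, ∃ C T : ℝ, 0 < T ∧ ∀ x : X, ∀ t : ℝ, T ≤ t →
      |a x t - ∑ j ∈ Finset.Icc (-(N:ℤ)) ((n:ℤ) - 1), c j x * t ^ j|
        ≤ C * t ^ (-(N:ℝ) - 1))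
    (hint : ∀ ρ : ℝ, 0 < ρ →
      Integrable (fun p : X × ℝ => Real.exp (-p.2 * ρ) * a p.1 p.2)
        (μ.prod (volume.restrict (Ioi (0:ℝ))))) :
    ∃ δ M : ℝ, 0 < δ ∧ ∀ ρ ∈ Ioo (0:ℝ) δ,
      |(∫ x, (∫ t in Ioi (0:ℝ), Real.exp (-t * ρ) * a x t) ∂μ)
        - ((∑ j ∈ Finset.range n,
            ((Nat.factorial (n - 1 - j) : ℝ) * ∫ x, c ((n:ℤ) - 1 - j) x ∂μ)
              * ρ ^ ((j : ℤ) - n))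
          + (-(∫ x, c (-1) x ∂μ)) * Real.log ρ)| ≤ M := by
  obtain ⟨C, T, hT, hC⟩ := hexp 1
  obtain ⟨M, hM⟩ := IsCompact.exists_bound_of_continuousOn
    (isCompact_univ.prod (isCompact_Icc (a := (0 : ℝ)) (b := T))) ha.continuousOn
  set s := Finset.Icc (-1 : ℤ) ((n : ℤ) - 1)
  set I : ℤ → ℝ → ℝ := fun j ρ => ∫ t in Ioi T, exp (-t * ρ) * t ^ j
  have hclose : ∀ ρ ∈ Ioi (0 : ℝ), |(∫ x, (∫ t in Ioi 0, exp (-t * ρ) * a x t) ∂μ)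
      - ∑ j ∈ s, (∫ x, c j x ∂μ) * I j ρ| ≤ (M * T + C * T⁻¹) * μ.real univ := fun ρ hρ =>
    abs_integral_sub_sum_integral_mul_le (hint ρ hρ).integral_prod_left (fun j _ => hc j)
      fun x => abs_integral_Ioi_exp_neg_mul_sub_sum_zpow_le hT hρ (ha.uncurry_left x)
        (fun t ht => by simpa using hM (x, t) ⟨mem_univ x, Ioc_subset_Icc_self ht⟩)
        (fun t ht => by simpa [show (-1 - 1 : ℝ) = -2 by norm_num] using hC x t ht)
  have hmodel : (fun ρ => ∑ j ∈ s, (∫ x, c j x ∂μ) * (I j ρ - laplaceZpowMain j ρ))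
      =O[𝓝[>] 0] fun _ => (1 : ℝ) :=
    IsBigO.fun_sum fun j hj =>
      (isBigO_setIntegral_Ioi_exp_neg_mul_mul_zpow_sub hT (Finset.mem_Icc.1 hj).1).const_mul_left _
  refine exists_forall_Ioo_abs_le_of_isBigO_one (((IsBoundedUnder.isBigO_one ℝ
    (isBoundedUnder_of_eventually_le (eventually_nhdsWithin_of_forall hclose))).add
      hmodel).congr_left fun ρ => ?_)
  rw [sum_range_factorial_mul_zpow_add_neg_mul_log (fun j => ∫ x, c j x ∂μ)]
  simp only [mul_sub, Finset.sum_sub_distrib]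
  ring

/-- Laplace transform of a classical symbol: if `a(x,t) ~ Σ_{j=n-1}^{-∞} a_j(x) t^j`
uniformly in `x` on a finite measure space, then
`S(ρ) = ∫_X ∫_0^∞ e^{-tρ} a(x,t) dt dμ(x)` has the expansion
`Σ_{j=0}^{n-1} b_j ρ^{j-n} + b log ρ + O(1)` as `ρ → 0⁺`, with
`b_j = (n-1-j)! ∫_X a_{n-1-j} dμ` and `b = -∫_X a_{-1} dμ`. -/
theorem stmt_3 {X : Type*} [TopologicalSpace X] [CompactSpace X] [MeasurableSpace X] (μ : Measure X) [IsFiniteMeasure μ]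
    (n : ℕ) (hn : 1 ≤ n) (a : X → ℝ → ℝ) (c : ℤ → X → ℝ)
    (ha : Continuous (Function.uncurry a))
    (hc : ∀ j : ℤ, Integrable (c j) μ)
    (hmeas : ∀ j : ℤ, Measurable (c j))
    (hexp : ∀ N : ℕ, ∃ C T : ℝ, 0 < T ∧ ∀ x : X, ∀ t : ℝ, T ≤ t →
      |a x t - ∑ j ∈ Finset.Icc (-(N:ℤ)) ((n:ℤ) - 1), c j x * t ^ j|
        ≤ C * t ^ (-(N:ℝ) - 1))
    (hint : ∀ ρ : ℝ, 0 < ρ →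
      Integrable (fun p : X × ℝ => Real.exp (-p.2 * ρ) * a p.1 p.2)
        (μ.prod (volume.restrict (Ioi (0:ℝ))))) :
    ∃ δ M : ℝ, 0 < δ ∧ ∀ ρ ∈ Ioo (0:ℝ) δ,
      |(∫ x, (∫ t in Ioi (0:ℝ), Real.exp (-t * ρ) * a x t) ∂μ)
        - ((∑ j ∈ Finset.range n,
            ((Nat.factorial (n - 1 - j) : ℝ) * ∫ x, c ((n:ℤ) - 1 - j) x ∂μ)
              * ρ ^ ((j : ℤ) - n))
          + (-(∫ x, c (-1) x ∂μ)) * Real.log ρ)| ≤ M :=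
  stmt_3_general μ n a c ha hc hexp hint
end

section
/- Suppose A(ε,t) = φ(ε,t)ε^{-n} + ψ(ε,t) log ε with φ, ψ real analytic in (ε,t) near (0,t₀), and suppose ∂_t A(ε,t) = ε·u(ε,t) where u is again of the form φ₁(ε,t)ε^{-n} + ψ₁(ε,t) log ε with φ₁, ψ₁ real analytic. Then ∂_t ψ(0,t) = 0, i.e., the coefficient of ε⁰ log ε in A is independent of t. -/
/-!
Differentiating `A = φ ε⁻ⁿ + ψ log ε` in `t` and multiplying `∂ₜA = ε u` by `εⁿ` gives, for `ε > 0`,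
`ε φ₁ - ∂ₜφ = εⁿ (∂ₜψ - ε ψ₁) log ε`. The left side is analytic in `ε`, while `εⁿ g(ε) log ε` can only
be analytic at `0` if `g(0) = 0`: peeling off factors of `ε` with `dslope` reduces this to `n = 0`,
where `g = h / log ε → 0`. Hence `∂ₜψ(0, t) = 0`.
-/

open Real Set Filter Topology

lemma eq_zero_of_eventually_eq_mul_log {h g : ℝ → ℝ} (hh : ContinuousAt h 0)
    (hg : ContinuousAt g 0) (heq : h =ᶠ[𝓝[>] 0] fun ε ↦ g ε * log ε) : g 0 = 0 := by
  have hlog_inv : Tendsto (fun ε ↦ (log ε)⁻¹) (𝓝[>] 0) (𝓝 0) :=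
    tendsto_inv_atBot_zero.comp tendsto_log_nhdsGT_zero
  have hg_eq : (fun ε ↦ h ε * (log ε)⁻¹) =ᶠ[𝓝[>] 0] g := by
    filter_upwards [heq, Ioo_mem_nhdsGT one_pos] with ε hε hε1
    have : log ε ≠ 0 := (log_neg hε1.1 hε1.2).ne
    rw [hε, mul_inv_cancel_right₀ this]
  have hlim := ((hh.tendsto.mono_left nhdsWithin_le_nhds).mul hlog_inv).congr' hg_eq
  rw [mul_zero] at hlim
  exact tendsto_nhds_unique (hg.tendsto.mono_left nhdsWithin_le_nhds) hlim

lemma AnalyticAt.eq_zero_of_eventually_eq_pow_mul_log (n : ℕ) {h g : ℝ → ℝ}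
    (hh : AnalyticAt ℝ h 0) (hg : ContinuousAt g 0)
    (heq : h =ᶠ[𝓝[>] 0] fun ε ↦ ε ^ n * g ε * Real.log ε) : g 0 = 0 := by
  induction n generalizing h with
  | zero => exact eq_zero_of_eventually_eq_mul_log hh.continuousAt hg (by simpa using heq)
  | succ n ih =>
    -- `ε ^ (n + 1) g(ε) log ε = ε ^ n g(ε) (ε log ε)`, and `ε log ε` extends continuously by `0`.
    have hrhs : ContinuousAt (fun ε ↦ ε ^ n * g ε * (ε * Real.log ε)) 0 :=
      ((continuousAt_pow 0 n).mul hg).mul continuous_mul_log.continuousAt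
    have hh0 : h 0 = 0 := by
      refine (tendsto_nhds_unique (l := 𝓝[>] (0 : ℝ))
        (hh.continuousAt.tendsto.mono_left nhdsWithin_le_nhds) ((hrhs.tendsto.mono_left nhdsWithin_le_nhds).congr' ?_)).trans (by simp)
      filter_upwards [heq] with ε hε
      rw [hε]; ring
    obtain ⟨p, hp⟩ := hh
    refine ih hp.has_fpower_series_dslope_fslope.analyticAt ?_
    filter_upwards [heq, self_mem_nhdsWithin] with ε hε (hεpos : 0 < ε)
    rw [dslope_of_ne _ hεpos.ne', slope_def_field, hε, hh0, sub_zero, sub_zero]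
    field_simp
    ring

lemma eventually_eq_zero_of_eventually_eq_pow_mul_log {E : Type*} [NormedAddCommGroup E]
    [NormedSpace ℝ E] (n : ℕ) {H G : ℝ × E → ℝ} {t₀ : E} (hH : AnalyticAt ℝ H (0, t₀))
    (hG : AnalyticAt ℝ G (0, t₀))
    (heq : ∀ᶠ p in 𝓝 (0, t₀), 0 < p.1 → H p = p.1 ^ n * G p * Real.log p.1) :
    ∀ᶠ t in 𝓝 t₀, G (0, t) = 0 := by
  have hslice := (Continuous.prodMk_right (0 : ℝ)).tendsto t₀
  rw [nhds_prod_eq] at heq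
  filter_upwards [(eventually_swap_iff.mp heq).curry, hslice.eventually hH.eventually_analyticAt,
    hslice.eventually hG.eventually_analyticAt] with t ht hHt hGt
  refine AnalyticAt.eq_zero_of_eventually_eq_pow_mul_log n (h := fun ε ↦ H (ε, t))
    (hHt.comp₂ analyticAt_id analyticAt_const)
    (hGt.comp₂ analyticAt_id analyticAt_const).continuousAt ?_
  filter_upwards [ht.filter_mono nhdsWithin_le_nhds, self_mem_nhdsWithin] with ε hε hεpos
  exact hε hεpos

section PartialSnd

variable {E F : Type*} [NormedAddCommGroup E] [NormedSpace ℝ E] [NormedAddCommGroup F]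
  [NormedSpace ℝ F]

noncomputable def partialSnd (f : E × ℝ → F) (p : E × ℝ) : F :=
  fderiv ℝ f p (0, 1)

lemma AnalyticAt.partialSnd [CompleteSpace F] {f : E × ℝ → F} {p : E × ℝ}
    (hf : AnalyticAt ℝ f p) : AnalyticAt ℝ (partialSnd f) p :=
  ((ContinuousLinearMap.apply ℝ F ((0 : E), (1 : ℝ))).analyticAt _).comp hf.fderiv

lemma DifferentiableAt.hasDerivAt_partialSnd {f : E × ℝ → F} {a : E} {b : ℝ}
    (hf : DifferentiableAt ℝ f (a, b)) : HasDerivAt (fun t ↦ f (a, t)) (partialSnd f (a, b)) b :=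
  hf.hasFDerivAt.comp_hasDerivAt b ((hasDerivAt_const b a).prodMk (hasDerivAt_id b))

end PartialSnd

/-- If `A(ε,t) = φ(ε,t) ε^{-n} + ψ(ε,t) log ε` with `φ, ψ` real analytic near
`(0,t₀)` and `∂_t A(ε,t) = ε · (φ₁(ε,t) ε^{-n} + ψ₁(ε,t) log ε)` with `φ₁, ψ₁`
real analytic, then `∂_t ψ(0,t) = 0`: the coefficient of `ε⁰ log ε` in `A` is
independent of `t`. -/
theorem stmt_19 (n : ℕ) (t₀ : ℝ) (φ ψ φ₁ ψ₁ : ℝ × ℝ → ℝ)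
    (hφ : AnalyticAt ℝ φ (0, t₀)) (hψ : AnalyticAt ℝ ψ (0, t₀))
    (hφ₁ : AnalyticAt ℝ φ₁ (0, t₀)) (hψ₁ : AnalyticAt ℝ ψ₁ (0, t₀))
    (hvar : ∀ᶠ p : ℝ × ℝ in nhds (0, t₀), 0 < p.1 →
      HasDerivAt (fun t => φ (p.1, t) * p.1 ^ (-(n:ℤ)) + ψ (p.1, t) * Real.log p.1)
        (p.1 * (φ₁ p * p.1 ^ (-(n:ℤ)) + ψ₁ p * Real.log p.1)) p.2) :
    ∀ᶠ t in nhds t₀, deriv (fun s => ψ (0, s)) t = 0 := by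
  set H : ℝ × ℝ → ℝ := fun p ↦ p.1 * φ₁ p - partialSnd φ p
  set G : ℝ × ℝ → ℝ := fun p ↦ partialSnd ψ p - p.1 * ψ₁ p
  have hlog : ∀ᶠ p in 𝓝 (0, t₀), 0 < p.1 → H p = p.1 ^ n * G p * Real.log p.1 := by
    filter_upwards [hvar, hφ.eventually_analyticAt, hψ.eventually_analyticAt]
      with ⟨ε, t⟩ hA hφp hψp hε
    have hderiv := ((hφp.differentiableAt.hasDerivAt_partialSnd.mul_const (ε ^ (-(n : ℤ)))).add
      (hψp.differentiableAt.hasDerivAt_partialSnd.mul_const (Real.log ε))).unique (hA hε)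
    rw [zpow_neg, zpow_natCast] at hderiv
    field_simp at hderiv
    linear_combination -hderiv
  have hG0 := eventually_eq_zero_of_eventually_eq_pow_mul_log n
    ((analyticAt_fst.mul hφ₁).sub hφ.partialSnd) (hψ.partialSnd.sub (analyticAt_fst.mul hψ₁)) hlog
  have hslice := (Continuous.prodMk_right (0 : ℝ)).tendsto t₀
  filter_upwards [hG0, hslice.eventually hψ.eventually_analyticAt] with t hGt hψt
  rw [hψt.differentiableAt.hasDerivAt_partialSnd.deriv]
  simpa [G] using hGt
end
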